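/- arXiv:1809.10231 — 3 statements merged into one kernel-verified Lean document; each statement's English description precedes it below -/
import Mathlib

section
/- Let 0 < u ≤ 2^{−5/2} and let p ∈ [0,1]². Then the Lebesgue measure (area) of the set T(p) = {q ∈ [0,1]² : p ≤ q componentwise, q ≠ p, and min(q₁ − p₁, q₂ − p₂) ≤ u^{1/5}·‖q − p‖₂} is at most √2 · u^{1/5}. -/
/-!
For `v = q - p ∈ [0,1]²` with `v ≥ 0` we have `‖v‖ ≤ √2 · max v₀ v₁`, so the condition gives
`min v₀ v₁ ≤ c · max v₀ v₁` with `c = √2 u^{1/5}`: the vector `v` lies in the triangle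
`0 ≤ v₁ ≤ c v₀ ≤ c` or in its mirror image in the diagonal. Each of the two has area `c / 2`.
-/

open MeasureTheory Set

theorem volume_region_between_cc_eq_lintegral {α : Type*} [MeasurableSpace α] {μ : Measure α}
    [SFinite μ] {f g : α → ℝ} {s : Set α} (hf : Measurable f) (hg : Measurable g)
    (hs : MeasurableSet s) :
    μ.prod volume {z : α × ℝ | z.1 ∈ s ∧ z.2 ∈ Icc (f z.1) (g z.1)} =
      ∫⁻ x in s, ENNReal.ofReal (g x - f x) ∂μ := by
  rw [Measure.prod_apply (measurableSet_region_between_cc hf hg hs), ← lintegral_indicator hs]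
  congr 1 with x
  by_cases hx : x ∈ s
  · rw [indicator_of_mem hx]
    simp only [preimage_ofPred_eq, hx, true_and, ofPred_mem_eq, Real.volume_Icc]
  · simp [hx]

def triangle (c : ℝ) : Set (ℝ × ℝ) := {z | z.1 ∈ Icc 0 1 ∧ z.2 ∈ Icc 0 (c * z.1)}

theorem measurableSet_triangle (c : ℝ) : MeasurableSet (triangle c) :=
  measurableSet_region_between_cc measurable_const (measurable_const_mul c) measurableSet_Icc

theorem volume_triangle {c : ℝ} (hc : 0 ≤ c) : volume (triangle c) = ENNReal.ofReal (c / 2) := by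
  rw [triangle, Measure.volume_eq_prod, volume_region_between_cc_eq_lintegral measurable_const
    (measurable_const_mul c) measurableSet_Icc]
  simp only [sub_zero]
  rw [← ofReal_integral_eq_lintegral_ofReal
      ((continuous_const_mul c).integrableOn_Icc)
      ((ae_restrict_iff' measurableSet_Icc).2 (.of_forall fun x hx => mul_nonneg hc hx.1)),
    integral_Icc_eq_integral_Ioc, ← intervalIntegral.integral_of_le zero_le_one,
    intervalIntegral.integral_const_mul, integral_id]
  norm_num [div_eq_mul_inv]

theorem measurePreserving_sub_coords (p : EuclideanSpace ℝ (Fin 2)) :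
    MeasurePreserving (fun q : EuclideanSpace ℝ (Fin 2) => (q 0 - p 0, q 1 - p 1)) :=
  ((volume_preserving_finTwoArrow ℝ).comp (PiLp.volume_preserving_ofLp (Fin 2))).comp
    (measurePreserving_sub_right volume p)

theorem min_le_sqrt_two_mul_max {x y ε : ℝ} (hx : 0 ≤ x) (hy : 0 ≤ y) (hε : 0 ≤ ε)
    (h : min x y ≤ ε * √(x ^ 2 + y ^ 2)) : min x y ≤ √2 * ε * max x y := by
  have hnorm : √(x ^ 2 + y ^ 2) ≤ √2 * max x y := by
    rw [← Real.sqrt_sq (le_max_of_le_left hx), ← Real.sqrt_mul zero_le_two]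
    gcongr
    nlinarith [le_max_left x y, le_max_right x y]
  calc min x y ≤ ε * (√2 * max x y) := h.trans (by gcongr)
    _ = √2 * ε * max x y := by ring

theorem mem_triangle_union_swap {x y c : ℝ} (hx : x ∈ Icc 0 1) (hy : y ∈ Icc 0 1)
    (h : min x y ≤ c * max x y) : (x, y) ∈ triangle c ∪ Prod.swap ⁻¹' triangle c := by
  rcases le_total y x with hyx | hxy
  · rw [min_eq_right hyx, max_eq_left hyx] at h
    exact Or.inl ⟨hx, hy.1, h⟩
  · rw [min_eq_left hxy, max_eq_right hxy] at h
    exact Or.inr ⟨hy, hx.1, h⟩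

theorem volume_triangle_union_swap_le {c : ℝ} (hc : 0 ≤ c) :
    volume (triangle c ∪ Prod.swap ⁻¹' triangle c) ≤ ENNReal.ofReal c := by
  have hswap : volume (Prod.swap ⁻¹' triangle c) = volume (triangle c) := by
    rw [Measure.volume_eq_prod]
    exact Measure.measurePreserving_swap.measure_preimage
      (measurableSet_triangle c).nullMeasurableSet
  calc volume (triangle c ∪ Prod.swap ⁻¹' triangle c)
      ≤ volume (triangle c) + volume (Prod.swap ⁻¹' triangle c) := measure_union_le _ _
    _ = ENNReal.ofReal c := by
      rw [hswap, volume_triangle hc, ← ENNReal.ofReal_add (by positivity) (by positivity),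
        add_halves]

theorem EuclideanSpace.norm_fin_two (v : EuclideanSpace ℝ (Fin 2)) :
    ‖v‖ = √(v 0 ^ 2 + v 1 ^ 2) := by
  simp [EuclideanSpace.norm_eq, Fin.sum_univ_two]

theorem stmt_9_general (u : ℝ) (hu0 : 0 < u)
    (p : EuclideanSpace ℝ (Fin 2)) (hp : ∀ i, p i ∈ Set.Icc (0 : ℝ) 1) :
    volume {q : EuclideanSpace ℝ (Fin 2) |
        (∀ i, q i ∈ Set.Icc (0 : ℝ) 1) ∧ (∀ i, p i ≤ q i) ∧ q ≠ p ∧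
        min (q 0 - p 0) (q 1 - p 1) ≤ u ^ ((1 : ℝ) / 5) * ‖q - p‖} ≤
      ENNReal.ofReal (Real.sqrt 2 * u ^ ((1 : ℝ) / 5)) := by
  set ε := u ^ ((1 : ℝ) / 5)
  have hε : 0 ≤ ε := Real.rpow_nonneg hu0.le _
  have hcover : {q : EuclideanSpace ℝ (Fin 2) |
        (∀ i, q i ∈ Set.Icc (0 : ℝ) 1) ∧ (∀ i, p i ≤ q i) ∧ q ≠ p ∧
        min (q 0 - p 0) (q 1 - p 1) ≤ ε * ‖q - p‖} ⊆
      (fun q : EuclideanSpace ℝ (Fin 2) => (q 0 - p 0, q 1 - p 1)) ⁻¹'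
        (triangle (√2 * ε) ∪ Prod.swap ⁻¹' triangle (√2 * ε)) := by
    rintro q ⟨hq, hpq, -, hmin⟩
    have hcoord : ∀ i, q i - p i ∈ Icc 0 1 := fun i =>
      ⟨sub_nonneg.2 (hpq i), by linarith [(hq i).2, (hp i).1]⟩
    rw [EuclideanSpace.norm_fin_two] at hmin
    exact mem_triangle_union_swap (hcoord 0) (hcoord 1)
      (min_le_sqrt_two_mul_max (hcoord 0).1 (hcoord 1).1 hε hmin)
  calc _ ≤ _ := measure_mono hcover
    _ = volume (triangle (√2 * ε) ∪ Prod.swap ⁻¹' triangle (√2 * ε)) :=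
      (measurePreserving_sub_coords p).measure_preimage
        ((measurableSet_triangle _).union
          ((measurableSet_triangle _).preimage measurable_swap)).nullMeasurableSet
    _ ≤ _ := volume_triangle_union_swap_le (by positivity)

/-- The non-diagonal volume lemma (Lemma `non-diag_lemma`): for
`0 < u ≤ 2^{−5/2}` and `p` in the unit square, the area of the set of points
`q` of the unit square with `p ≤ q`, `q ≠ p`, whose direction from `p` is
non-diagonal (i.e. `min(q₁−p₁, q₂−p₂) ≤ u^{1/5}·‖q−p‖₂`) is at most
`√2 · u^{1/5}`. -/
theorem stmt_9 (u : ℝ) (hu0 : 0 < u) (hu : u ≤ (2 : ℝ) ^ (-(5 / 2) : ℝ))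
    (p : EuclideanSpace ℝ (Fin 2)) (hp : ∀ i, p i ∈ Set.Icc (0 : ℝ) 1) :
    volume {q : EuclideanSpace ℝ (Fin 2) |
        (∀ i, q i ∈ Set.Icc (0 : ℝ) 1) ∧ (∀ i, p i ≤ q i) ∧ q ≠ p ∧
        min (q 0 - p 0) (q 1 - p 1) ≤ u ^ ((1 : ℝ) / 5) * ‖q - p‖} ≤
      ENNReal.ofReal (Real.sqrt 2 * u ^ ((1 : ℝ) / 5)) :=
  stmt_9_general u hu0 p hp
end

section
/- Let u > 0 and let c₁, c₂ ∈ [0,1]² with c₁ ≤ c₂ componentwise and ‖c₂ − c₁‖₂ ≥ √u. Set p = c₁ + (−u/2, u/2), q = c₂ + (u/2, −u/2), p' = c₁ + (u/2, −u/2), q' = c₂ + (−u/2, u/2). Then the line through p and q meets the anti-diagonal {x ∈ ℝ² : x₁ + x₂ = 0} in a unique point b, the line through p' and q' meets it in a unique point b', and ‖b − b'‖_∞ ≤ 4√u. -/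
/-! Both lines start at a point of coordinate sum `a = c₁.1 + c₁.2` and have a direction of
coordinate sum `s = ‖c₂ - c₁‖₁ ≥ √u`, so both meet the anti-diagonal at the parameter `-a / s`.
Hence `b - b' = (1 + 2a/s) • (-u, u)`, and since `a + s ≤ 2` (as `c₂` lies in the unit square),
`‖b - b'‖_∞ ≤ u (1 + 2 (2 - s) / s) = 4u/s - u ≤ 4√u`. -/

theorem LinearMap.mem_line_and_apply_eq_zero_iff {K E : Type*} [Field K] [AddCommGroup E]
    [Module K E] (f : E →ₗ[K] K) {p d : E} (hd : f d ≠ 0) {t : K} (ht : f p + t * f d = 0)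
    (x : E) : ((∃ s : K, x = p + s • d) ∧ f x = 0) ↔ x = p + t • d := by
  constructor
  · rintro ⟨⟨s, rfl⟩, hx⟩
    have hst : s = t := by
      rw [map_add, map_smul, smul_eq_mul] at hx
      exact mul_right_cancel₀ hd (by linear_combination hx - ht)
    rw [hst]
  · rintro rfl
    exact ⟨⟨t, rfl⟩, by rw [map_add, map_smul, smul_eq_mul, ht]⟩

theorem Real.sqrt_sq_add_sq_le_add {x y : ℝ} (hx : 0 ≤ x) (hy : 0 ≤ y) :
    √(x ^ 2 + y ^ 2) ≤ x + y :=
  Real.sqrt_le_iff.2 ⟨by positivity, by nlinarith [mul_nonneg hx hy]⟩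

theorem mul_one_add_two_mul_div_le_four_mul_sqrt {u s a : ℝ} (hu : 0 < u) (hs : √u ≤ s)
    (has : a + s ≤ 2) : u * (1 + 2 * (a / s)) ≤ 4 * √u := by
  have hsu : 0 < √u := Real.sqrt_pos.2 hu
  have hs0 : 0 < s := hsu.trans_le hs
  have hsq : √u * √u = u := Real.mul_self_sqrt hu.le
  calc u * (1 + 2 * (a / s)) ≤ u * (1 + 2 * ((2 - s) / s)) := by
        gcongr
        linarith
    _ = 4 * u / s - u := by field_simp; ring
    _ ≤ 4 * u / √u := by
        have : 4 * u / s ≤ 4 * u / √u := by gcongr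
        linarith
    _ = 4 * √u := by rw [div_eq_iff hsu.ne', mul_assoc, hsq]

/-- The base-point lemma (Lemma `b_lemma`): for centers `c₁ ≤ c₂` in the unit
square with `‖c₂ − c₁‖₂ ≥ √u`, the two extreme lines through
`p = c₁ + (−u/2, u/2)`, `q = c₂ + (u/2, −u/2)` and through
`p' = c₁ + (u/2, −u/2)`, `q' = c₂ + (−u/2, u/2)` each meet the anti-diagonal
`x₁ + x₂ = 0` in a unique point (`b` resp. `b'`), and `‖b − b'‖_∞ ≤ 4√u`. -/
theorem stmt_12 (u : ℝ) (hu : 0 < u) (c1 c2 : ℝ × ℝ)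
    (hc1 : c1 ∈ Set.Icc ((0 : ℝ), (0 : ℝ)) (1, 1))
    (hc2 : c2 ∈ Set.Icc ((0 : ℝ), (0 : ℝ)) (1, 1))
    (hle : c1 ≤ c2)
    (hdist : Real.sqrt u ≤ Real.sqrt ((c2.1 - c1.1) ^ 2 + (c2.2 - c1.2) ^ 2)) :
    ∃ b b' : ℝ × ℝ,
      (∀ x : ℝ × ℝ,
        ((∃ t : ℝ, x = (c1.1 - u / 2, c1.2 + u / 2) +
            t • ((c2.1 + u / 2, c2.2 - u / 2) - (c1.1 - u / 2, c1.2 + u / 2))) ∧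
          x.1 + x.2 = 0) ↔ x = b) ∧
      (∀ x : ℝ × ℝ,
        ((∃ t : ℝ, x = (c1.1 + u / 2, c1.2 - u / 2) +
            t • ((c2.1 - u / 2, c2.2 + u / 2) - (c1.1 + u / 2, c1.2 - u / 2))) ∧
          x.1 + x.2 = 0) ↔ x = b') ∧
      max |b.1 - b'.1| |b.2 - b'.2| ≤ 4 * Real.sqrt u := by
  have ha : 0 ≤ c1.1 + c1.2 := add_nonneg hc1.1.1 hc1.1.2
  have has : (c1.1 + c1.2) + ((c2.1 - c1.1) + (c2.2 - c1.2)) ≤ 2 := by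
    linarith [hc2.2.1, hc2.2.2]
  set a := c1.1 + c1.2
  set s := (c2.1 - c1.1) + (c2.2 - c1.2)
  have hs : √u ≤ s :=
    hdist.trans (Real.sqrt_sq_add_sq_le_add (sub_nonneg.2 hle.1) (sub_nonneg.2 hle.2))
  have hs0 : 0 < s := (Real.sqrt_pos.2 hu).trans_le hs
  let f := LinearMap.fst ℝ ℝ ℝ + LinearMap.snd ℝ ℝ ℝ
  have base_point (p d : ℝ × ℝ) (hp : f p = a) (hd : f d = s) (x : ℝ × ℝ) :
      ((∃ r : ℝ, x = p + r • d) ∧ f x = 0) ↔ x = p + (-(a / s)) • d :=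
    f.mem_line_and_apply_eq_zero_iff (hd ▸ hs0.ne') (by rw [hp, hd]; field_simp; ring) x
  have hr : 0 ≤ u * (1 + 2 * (a / s)) :=
    mul_nonneg hu.le (by linarith [div_nonneg ha hs0.le])
  refine ⟨_ + (-(a / s)) • _, _ + (-(a / s)) • _,
    base_point _ _ ?_ ?_, base_point _ _ ?_ ?_, ?_⟩
  iterate 4
    (simp only [f, a, s, LinearMap.add_apply, LinearMap.fst_apply, LinearMap.snd_apply,
      Prod.fst_sub, Prod.snd_sub]; ring)
  calc _ = max |-(u * (1 + 2 * (a / s)))| |u * (1 + 2 * (a / s))| := by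
        congr 2 <;> simp only [Prod.fst_add, Prod.snd_add, Prod.smul_fst, Prod.smul_snd,
          Prod.fst_sub, Prod.snd_sub, smul_eq_mul] <;> ring
    _ = u * (1 + 2 * (a / s)) := by rw [abs_neg, max_self, abs_of_nonneg hr]
    _ ≤ 4 * √u := mul_one_add_two_mul_div_le_four_mul_sqrt hu hs has
end

section
/- Let u > 0 and let c₁, c₂ ∈ ℝ² with c₁ ≤ c₂ componentwise and ‖c₂ − c₁‖₂ ≥ √u. Set v = (c₂ − c₁) + (u, −u), v' = (c₂ − c₁) + (−u, u), a = v/‖v‖₂, a' = v'/‖v'‖₂. Then the weights ℓ̂ = min(a₁, a₂) and ℓ̂' = min(a'₁, a'₂) satisfy |ℓ̂ − ℓ̂'| ≤ 4√u. -/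
/-!
A weight `min a₁ a₂` is 1-Lipschitz in the direction `a`, so `|ℓ̂ − ℓ̂'| ≤ ‖a − a'‖`. With
`w = c₂ − c₁`, the directions are the normalisations of `w ± d`, and the Dunkl–Williams inequality
of inner product spaces, `‖x/‖x‖ − y/‖y‖‖ (‖x‖ + ‖y‖) ≤ 2 ‖x − y‖`, gives
`‖a − a'‖ (‖w + d‖ + ‖w − d‖) ≤ 4 ‖d‖ = 4√2 u`. By the parallelogram law
`(‖w + d‖ + ‖w − d‖)² ≥ 2 (‖w‖² + ‖d‖²) ≥ 2u`, hence `‖a − a'‖² ≤ 16 u`.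
-/

open scoped RealInnerProductSpace

theorem abs_min_sub_min_le_norm_sub {ι : Type*} [Fintype ι] {p : ENNReal} [Fact (1 ≤ p)]
    (x y : PiLp p (fun _ : ι => ℝ)) (i j : ι) :
    |min (x i) (x j) - min (y i) (y j)| ≤ ‖x - y‖ :=
  (abs_min_sub_min_le_max _ _ _ _).trans <|
    max_le (PiLp.norm_apply_le (x - y) i) (PiLp.norm_apply_le (x - y) j)

section InnerProductSpace

variable {E : Type*} [NormedAddCommGroup E] [InnerProductSpace ℝ E]

theorem norm_inv_norm_smul_sub_inv_norm_smul_mul_le {x y : E} (hx : x ≠ 0) (hy : y ≠ 0) :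
    ‖‖x‖⁻¹ • x - ‖y‖⁻¹ • y‖ * (‖x‖ + ‖y‖) ≤ 2 * ‖x - y‖ := by
  have hp : 0 < ‖x‖ := norm_pos_iff.mpr hx
  have hq : 0 < ‖y‖ := norm_pos_iff.mpr hy
  have hunit : ‖‖x‖⁻¹ • x - ‖y‖⁻¹ • y‖ ^ 2 * (‖x‖ * ‖y‖) = 2 * (‖x‖ * ‖y‖ - ⟪x, y⟫) := by
    rw [norm_sub_sq_real, norm_smul, norm_smul, norm_inv, norm_inv, norm_norm, norm_norm,
      real_inner_smul_left, real_inner_smul_right]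
    field_simp
    ring
  have hdiff : ‖x - y‖ ^ 2 = ‖x‖ ^ 2 - 2 * ⟪x, y⟫ + ‖y‖ ^ 2 := norm_sub_sq_real x y
  have hCS : -(‖x‖ * ‖y‖) ≤ ⟪x, y⟫ := neg_le_of_abs_le (abs_real_inner_le_norm x y)
  rw [← pow_le_pow_iff_left₀ (by positivity) (by positivity) two_ne_zero]
  refine le_of_mul_le_mul_right ?_ (mul_pos hp hq)
  -- the difference of the two sides is `2 (‖x‖ - ‖y‖)² (‖x‖‖y‖ + ⟪x, y⟫)`
  nlinarith [mul_nonneg (sq_nonneg (‖x‖ - ‖y‖)) (neg_le_iff_add_nonneg.mp hCS)]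

theorem norm_inv_norm_smul_add_sub_inv_norm_smul_sub_sq_mul_le {w d : E}
    (hadd : w + d ≠ 0) (hsub : w - d ≠ 0) :
    ‖‖w + d‖⁻¹ • (w + d) - ‖w - d‖⁻¹ • (w - d)‖ ^ 2 * (‖w‖ ^ 2 + ‖d‖ ^ 2) ≤ 8 * ‖d‖ ^ 2 := by
  have hDW := norm_inv_norm_smul_sub_inv_norm_smul_mul_le hadd hsub
  rw [add_sub_sub_cancel, ← two_smul ℝ d, norm_smul, Real.norm_two] at hDW
  set A := ‖‖w + d‖⁻¹ • (w + d) - ‖w - d‖⁻¹ • (w - d)‖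
  have hsq : A ^ 2 * (‖w + d‖ + ‖w - d‖) ^ 2 ≤ 16 * ‖d‖ ^ 2 := by
    have := pow_le_pow_left₀ (by positivity) hDW 2
    rw [mul_pow] at this
    linarith
  have hcross : A ^ 2 * (‖w + d‖ ^ 2 + ‖w - d‖ ^ 2) ≤ A ^ 2 * (‖w + d‖ + ‖w - d‖) ^ 2 := by
    gcongr
    nlinarith [mul_nonneg (norm_nonneg (w + d)) (norm_nonneg (w - d))]
  rw [parallelogram_law_with_norm ℝ w d] at hcross
  linarith

end InnerProductSpace

/-- The weight lemma (Lemma `weight_lemma`): for centers `c₁ ≤ c₂` with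
`‖c₂ − c₁‖₂ ≥ √u` and `d = (u, −u)`, the weights `ℓ̂ = min(a₁, a₂)` and
`ℓ̂' = min(a'₁, a'₂)` of the unit direction vectors `a = v/‖v‖₂`,
`a' = v'/‖v'‖₂` of `v = (c₂ − c₁) + (u, −u)` and `v' = (c₂ − c₁) + (−u, u)`
satisfy `|ℓ̂ − ℓ̂'| ≤ 4√u`. -/
theorem stmt_14 (u : ℝ) (hu : 0 < u) (c1 c2 d : EuclideanSpace ℝ (Fin 2))
    (hle : ∀ i, c1 i ≤ c2 i) (hdist : Real.sqrt u ≤ ‖c2 - c1‖)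
    (hd0 : d 0 = u) (hd1 : d 1 = -u) :
    |min ((‖(c2 - c1) + d‖⁻¹ • ((c2 - c1) + d)) 0)
         ((‖(c2 - c1) + d‖⁻¹ • ((c2 - c1) + d)) 1) -
     min ((‖(c2 - c1) - d‖⁻¹ • ((c2 - c1) - d)) 0)
         ((‖(c2 - c1) - d‖⁻¹ • ((c2 - c1) - d)) 1)| ≤ 4 * Real.sqrt u := by
  set w := c2 - c1
  have hadd : w + d ≠ 0 := fun h => by
    have := congrArg (· 0) h
    simp only [w, PiLp.add_apply, PiLp.sub_apply, hd0, PiLp.zero_apply] at this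
    linarith [hle 0]
  have hsub : w - d ≠ 0 := fun h => by
    have := congrArg (· 1) h
    simp only [w, PiLp.sub_apply, hd1, PiLp.zero_apply] at this
    linarith [hle 1]
  have hd : ‖d‖ ^ 2 = 2 * u ^ 2 := by
    rw [EuclideanSpace.norm_sq_eq, Fin.sum_univ_two, hd0, hd1]
    simp only [Real.norm_eq_abs, sq_abs]
    ring
  have hw : u ≤ ‖w‖ ^ 2 := (Real.sqrt_le_left (norm_nonneg w)).mp hdist
  have hbound := norm_inv_norm_smul_add_sub_inv_norm_smul_sub_sq_mul_le hadd hsub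
  refine (abs_min_sub_min_le_norm_sub _ _ 0 1).trans ?_
  rw [← pow_le_pow_iff_left₀ (norm_nonneg _) (by positivity) two_ne_zero, mul_pow,
    Real.sq_sqrt hu.le]
  nlinarith [sq_nonneg ‖‖w + d‖⁻¹ • (w + d) - ‖w - d‖⁻¹ • (w - d)‖]
end
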